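/- arXiv:2302.02262 — 5 statements merged into one kernel-verified Lean document; each statement's English description precedes it below -/
import Mathlib

section
/- Let 0<R<∞, p≥1, α₀,α₁ real. There exists a constant C>0 (depending on α₀,α₁,p,R) such that for every u:(0,R]→ℝ which is locally absolutely continuous with ∫₀ᴿ|u|^p r^{α₀} dr < ∞ and ∫₀ᴿ|u'|^p r^{α₁} dr < ∞, one has |u(R)| ≤ C((∫₀ᴿ|u|^p r^{α₀} dr)^{1/p} + (∫₀ᴿ|u'|^p r^{α₁} dr)^{1/p}). -/
open Real MeasureTheory Set

private lemma aux_pt {p x ε : ℝ} (hp : 1 ≤ p) (hx : 0 ≤ x) (hε : 0 < ε) :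
    x ≤ ε + ε ^ (1 - p) * x ^ p := by
  rcases le_or_gt x ε with h | h
  · have h2 : 0 ≤ ε ^ (1 - p) * x ^ p :=
      mul_nonneg (Real.rpow_nonneg hε.le _) (Real.rpow_nonneg hx _)
    linarith
  · have hx0 : 0 < x := hε.trans h
    have h1 : x ^ (1 - p) ≤ ε ^ (1 - p) :=
      Real.rpow_le_rpow_of_nonpos hε h.le (by linarith)
    have h2 : x ^ (1 - p) * x ^ p = x := by
      rw [← Real.rpow_add hx0]; norm_num
    have h3 : x ^ (1 - p) * x ^ p ≤ ε ^ (1 - p) * x ^ p :=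
      mul_le_mul_of_nonneg_right h1 (Real.rpow_nonneg hx0.le _)
    linarith

private lemma aux_eps {p X A B : ℝ} (hp : 1 ≤ p) (hA : 0 ≤ A) (hB : 0 ≤ B)
    (h : ∀ ε > 0, X ≤ A * ε + ε ^ (1 - p) * B) : X ≤ (A + 1) * B ^ (1 / p) := by
  have hp0 : (0 : ℝ) < p := by linarith
  rcases eq_or_lt_of_le hB with hB0 | hB0
  · subst hB0
    rw [Real.zero_rpow (by positivity), mul_zero]
    by_contra hc
    push_neg at hc
    have hε' : 0 < X / (2 * (A + 1)) := by positivity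
    have h1 := h _ hε'
    rw [mul_zero, add_zero] at h1
    have hA1 : (0 : ℝ) < A + 1 := by linarith
    have h2 : A * (X / (2 * (A + 1))) ≤ (A + 1) * (X / (2 * (A + 1))) :=
      mul_le_mul_of_nonneg_right (by linarith) hε'.le
    have h3 : (A + 1) * (X / (2 * (A + 1))) = X / 2 := by field_simp
    linarith
  · have hε : 0 < B ^ (1 / p) := Real.rpow_pos_of_pos hB0 _
    have h1 := h _ hε
    have hpne : p ≠ 0 := hp0.ne'
    have h2 : (B ^ (1 / p)) ^ (1 - p) * B = B ^ (1 / p) := by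
      nth_rewrite 2 [← Real.rpow_one B]
      rw [← Real.rpow_mul hB0.le, ← Real.rpow_add hB0]
      congr 1
      field_simp
      ring
    rw [h2] at h1
    nlinarith [hε.le]

private lemma aux_w {p m w x : ℝ} (hm : 0 < m) (hw : m ≤ w) (hx : 0 ≤ x) :
    x ^ p ≤ m⁻¹ * (x ^ p * w) := by
  rw [le_inv_mul_iff₀ hm]
  have h0 : 0 ≤ x ^ p := Real.rpow_nonneg hx p
  nlinarith [mul_le_mul_of_nonneg_right hw h0]

private lemma aux_abs {p m w x : ℝ} (hp : 1 ≤ p) (hm : 0 < m) (hw : m ≤ w) :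
    |x| ≤ 1 + m⁻¹ * (|x| ^ p * w) := by
  have h0 : (0:ℝ) ≤ |x| ^ p := Real.rpow_nonneg (abs_nonneg x) p
  have h1 : |x| ≤ 1 + |x| ^ p := by
    rcases le_or_gt (|x|) 1 with h | h
    · linarith
    · have h2 := Real.rpow_le_rpow_of_exponent_le h.le hp
      rw [Real.rpow_one] at h2
      linarith
  have h2 : |x| ^ p ≤ m⁻¹ * (|x| ^ p * w) := aux_w hm hw (abs_nonneg x)
  linarith

private lemma aux_pt' {p m w x ε : ℝ} (hp : 1 ≤ p) (hm : 0 < m) (hw : m ≤ w) (hε : 0 < ε) :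
    |x| ≤ ε + (ε ^ (1 - p) * m⁻¹) * (|x| ^ p * w) := by
  have h1 := aux_pt hp (abs_nonneg x) hε
  have h2 : |x| ^ p ≤ m⁻¹ * (|x| ^ p * w) := aux_w hm hw (abs_nonneg x)
  have h3 : ε ^ (1 - p) * |x| ^ p ≤ ε ^ (1 - p) * (m⁻¹ * (|x| ^ p * w)) :=
    mul_le_mul_of_nonneg_left h2 (Real.rpow_nonneg hε.le _)
  have h4 : (ε ^ (1 - p) * m⁻¹) * (|x| ^ p * w) = ε ^ (1 - p) * (m⁻¹ * (|x| ^ p * w)) := by ring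
  linarith [h4.ge]

private lemma aux_weight {a R : ℝ} (ha : 0 < a) (α : ℝ) {r : ℝ} (h1 : a ≤ r) (h2 : r ≤ R) :
    min (a ^ α) (R ^ α) ≤ r ^ α := by
  rcases le_or_gt 0 α with hα | hα
  · exact (min_le_left _ _).trans (Real.rpow_le_rpow ha.le h1 hα)
  · exact (min_le_right _ _).trans (Real.rpow_le_rpow_of_nonpos (ha.trans_le h1) h2 hα.le)

/-- Boundary value estimate: `|u(R)| ≤ C(‖u‖_{L^p_{α₀}} + ‖u'‖_{L^p_{α₁}})`. -/
theorem stmt_0 (R p α₀ α₁ : ℝ) (hR : 0 < R) (hp : 1 ≤ p) :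
    ∃ C > 0, ∀ u u' : ℝ → ℝ,
      (∀ t ∈ Ioc (0:ℝ) R, HasDerivAt u (u' t) t) →
      IntegrableOn (fun r => |u r| ^ p * r ^ α₀) (Ioo 0 R) →
      IntegrableOn (fun r => |u' r| ^ p * r ^ α₁) (Ioo 0 R) →
      |u R| ≤ C * ((∫ r in Ioo (0:ℝ) R, |u r| ^ p * r ^ α₀) ^ (1/p)
        + (∫ r in Ioo (0:ℝ) R, |u' r| ^ p * r ^ α₁) ^ (1/p)) := by
  have ha : 0 < R / 2 := by linarith
  have hp0 : (0 : ℝ) < p := by linarith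
  set a := R / 2 with ha_def
  have haR : a < R := by rw [ha_def]; linarith
  set m₀ := min (a ^ α₀) (R ^ α₀) with hm₀def
  set m₁ := min (a ^ α₁) (R ^ α₁) with hm₁def
  have hm₀ : 0 < m₀ := lt_min (Real.rpow_pos_of_pos ha _) (Real.rpow_pos_of_pos hR _)
  have hm₁ : 0 < m₁ := lt_min (Real.rpow_pos_of_pos ha _) (Real.rpow_pos_of_pos hR _)
  have hc₀ : 0 ≤ (m₀⁻¹) ^ (1 / p) := Real.rpow_nonneg (inv_nonneg.2 hm₀.le) _
  have hc₁ : 0 ≤ (m₁⁻¹) ^ (1 / p) := Real.rpow_nonneg (inv_nonneg.2 hm₁.le) _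
  have hc₀' : 0 < (m₀⁻¹) ^ (1 / p) := Real.rpow_pos_of_pos (inv_pos.2 hm₀) _
  refine ⟨(2 / R) * (a + 1) * (m₀⁻¹) ^ (1 / p) + (a + 1) * (m₁⁻¹) ^ (1 / p), ?_, ?_⟩
  · have h1 : 0 < (2 / R) * (a + 1) * (m₀⁻¹) ^ (1 / p) := by
      apply mul_pos (mul_pos (by positivity) (by linarith)) hc₀'
    have h2 : 0 ≤ (a + 1) * (m₁⁻¹) ^ (1 / p) := mul_nonneg (by linarith) hc₁
    linarith
  intro u u' hu h0 h1
  set w₀ : ℝ → ℝ := fun r => |u r| ^ p * r ^ α₀ with hw₀def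
  set w₁ : ℝ → ℝ := fun r => |u' r| ^ p * r ^ α₁ with hw₁def
  set I₀ := ∫ r in Ioo (0:ℝ) R, w₀ r with hI₀def
  set I₁ := ∫ r in Ioo (0:ℝ) R, w₁ r with hI₁def
  set sc : Set ℝ := Ioc a R with hscdef
  have hsc : MeasurableSet sc := measurableSet_Ioc
  have heq : volume.restrict sc = volume.restrict (Ioo a R) :=
    Measure.restrict_congr_set Ioo_ae_eq_Ioc.symm
  have hsub : Ioo a R ⊆ Ioo 0 R := Ioo_subset_Ioo ha.le le_rfl
  have hw₀sc : IntegrableOn w₀ sc := by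
    rw [IntegrableOn, heq]; exact h0.mono_set hsub
  have hw₁sc : IntegrableOn w₁ sc := by
    rw [IntegrableOn, heq]; exact h1.mono_set hsub
  have hnn₀ : 0 ≤ᵐ[volume.restrict (Ioo (0:ℝ) R)] w₀ :=
    (ae_restrict_iff' measurableSet_Ioo).2 (Filter.Eventually.of_forall fun r hr =>
      mul_nonneg (Real.rpow_nonneg (abs_nonneg _) _) (Real.rpow_nonneg hr.1.le _))
  have hnn₁ : 0 ≤ᵐ[volume.restrict (Ioo (0:ℝ) R)] w₁ :=
    (ae_restrict_iff' measurableSet_Ioo).2 (Filter.Eventually.of_forall fun r hr =>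
      mul_nonneg (Real.rpow_nonneg (abs_nonneg _) _) (Real.rpow_nonneg hr.1.le _))
  have hI₀nn : 0 ≤ I₀ := setIntegral_nonneg measurableSet_Ioo fun r hr =>
    mul_nonneg (Real.rpow_nonneg (abs_nonneg _) _) (Real.rpow_nonneg hr.1.le _)
  have hI₁nn : 0 ≤ I₁ := setIntegral_nonneg measurableSet_Ioo fun r hr =>
    mul_nonneg (Real.rpow_nonneg (abs_nonneg _) _) (Real.rpow_nonneg hr.1.le _)
  have hw₀le : ∫ r in sc, w₀ r ≤ I₀ := by
    rw [setIntegral_congr_set (Ioo_ae_eq_Ioc (a := a) (b := R)).symm]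
    exact setIntegral_mono_set h0 hnn₀ hsub.eventuallyLE
  have hw₁le : ∫ r in sc, w₁ r ≤ I₁ := by
    rw [setIntegral_congr_set (Ioo_ae_eq_Ioc (a := a) (b := R)).symm]
    exact setIntegral_mono_set h1 hnn₁ hsub.eventuallyLE
  have hmem : ∀ t ∈ sc, t ∈ Ioc (0:ℝ) R := fun t ht => ⟨ha.trans ht.1, ht.2⟩
  have hucont : ContinuousOn u sc := fun t ht =>
    ((hu t (hmem t ht)).continuousAt).continuousWithinAt
  have husm : AEStronglyMeasurable u (volume.restrict sc) := hucont.aestronglyMeasurable hsc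
  have hu'sm : AEStronglyMeasurable u' (volume.restrict sc) := by
    have hder : ∀ t ∈ sc, deriv u t = u' t := fun t ht => (hu t (hmem t ht)).deriv
    exact ((measurable_deriv u).aestronglyMeasurable.restrict).congr
      ((ae_restrict_iff' hsc).2 (Filter.Eventually.of_forall hder))
  have hconst : ∀ c : ℝ, IntegrableOn (fun _ => c) sc := fun c =>
    integrableOn_const measure_Ioc_lt_top.ne
  have huint : IntegrableOn u sc := by
    refine Integrable.mono' ((hconst 1).add (hw₀sc.const_mul m₀⁻¹)) husm ?_
    refine (ae_restrict_iff' hsc).2 (Filter.Eventually.of_forall fun r hr => ?_)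
    have hb := aux_abs (x := u r) hp hm₀ (aux_weight ha α₀ hr.1.le hr.2)
    simpa [Real.norm_eq_abs, hw₀def] using hb
  have hu'int : IntegrableOn u' sc := by
    refine Integrable.mono' ((hconst 1).add (hw₁sc.const_mul m₁⁻¹)) hu'sm ?_
    refine (ae_restrict_iff' hsc).2 (Filter.Eventually.of_forall fun r hr => ?_)
    have hb := aux_abs (x := u' r) hp hm₁ (aux_weight ha α₁ hr.1.le hr.2)
    simpa [Real.norm_eq_abs, hw₁def] using hb
  set J := ∫ r in sc, |u' r| with hJdef
  have hJnn : 0 ≤ J := setIntegral_nonneg hsc fun r _ => abs_nonneg _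
  have key : ∀ r ∈ sc, |u R| ≤ |u r| + J := by
    intro r hr
    have hrR : r ≤ R := hr.2
    have hr0 : 0 < r := ha.trans hr.1
    have hIoc : Ioc r R ⊆ sc := Ioc_subset_Ioc hr.1.le le_rfl
    have hint : IntervalIntegrable u' volume r R := by
      rw [intervalIntegrable_iff_integrableOn_Ioc_of_le hrR]
      exact hu'int.mono_set hIoc
    have ftc : ∫ t in r..R, u' t = u R - u r := by
      refine intervalIntegral.integral_eq_sub_of_hasDerivAt (fun t ht => ?_) hint
      rw [uIcc_of_le hrR] at ht
      exact hu t ⟨hr0.trans_le ht.1, ht.2⟩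
    have habs : |u R - u r| ≤ J := by
      rw [← ftc]
      calc |∫ t in r..R, u' t| ≤ ∫ t in r..R, |u' t| :=
            intervalIntegral.abs_integral_le_integral_abs hrR
        _ = ∫ t in Ioc r R, |u' t| := intervalIntegral.integral_of_le hrR
        _ ≤ J := setIntegral_mono_set hu'int.abs
              ((ae_restrict_iff' hsc).2 (Filter.Eventually.of_forall fun t _ => abs_nonneg _))
              hIoc.eventuallyLE
    have htri : |u R| ≤ |u r| + |u R - u r| := by
      calc |u R| = |u r + (u R - u r)| := by congr 1; ring
        _ ≤ |u r| + |u R - u r| := abs_add_le _ _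
    linarith
  have hvol : (volume sc).toReal = a := by
    rw [hscdef, Real.volume_Ioc, ENNReal.toReal_ofReal (by linarith)]
    rw [ha_def]; ring
  have havg : a * |u R| ≤ (∫ r in sc, |u r|) + a * J := by
    have hmono : (∫ _ in sc, |u R|) ≤ ∫ r in sc, (|u r| + J) :=
      setIntegral_mono_on (hconst _) (huint.abs.add (hconst J)) hsc key
    rw [setIntegral_const, smul_eq_mul, measureReal_def, hvol] at hmono
    rw [integral_add huint.abs (hconst J), setIntegral_const, smul_eq_mul, measureReal_def, hvol] at hmono
    linarith
  have hXb : ∀ ε > 0, (∫ r in sc, |u r|) ≤ a * ε + ε ^ (1 - p) * (m₀⁻¹ * I₀) := by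
    intro ε hε
    have hmono : (∫ r in sc, |u r|) ≤ ∫ r in sc, (ε + (ε ^ (1 - p) * m₀⁻¹) * w₀ r) :=
      setIntegral_mono_on huint.abs ((hconst ε).add (hw₀sc.const_mul _)) hsc
        fun r hr => aux_pt' hp hm₀ (aux_weight ha α₀ hr.1.le hr.2) hε
    rw [integral_add (hconst ε) (hw₀sc.const_mul _), setIntegral_const, smul_eq_mul, measureReal_def, hvol,
      integral_const_mul] at hmono
    have h2 : (ε ^ (1 - p) * m₀⁻¹) * (∫ r in sc, w₀ r) ≤ (ε ^ (1 - p) * m₀⁻¹) * I₀ :=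
      mul_le_mul_of_nonneg_left hw₀le
        (mul_nonneg (Real.rpow_nonneg hε.le _) (inv_nonneg.2 hm₀.le))
    calc (∫ r in sc, |u r|) ≤ a * ε + (ε ^ (1 - p) * m₀⁻¹) * ∫ r in sc, w₀ r := hmono
      _ ≤ a * ε + (ε ^ (1 - p) * m₀⁻¹) * I₀ := by linarith
      _ = a * ε + ε ^ (1 - p) * (m₀⁻¹ * I₀) := by ring
  have hJb : ∀ ε > 0, J ≤ a * ε + ε ^ (1 - p) * (m₁⁻¹ * I₁) := by
    intro ε hε
    have hmono : J ≤ ∫ r in sc, (ε + (ε ^ (1 - p) * m₁⁻¹) * w₁ r) :=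
      setIntegral_mono_on hu'int.abs ((hconst ε).add (hw₁sc.const_mul _)) hsc
        fun r hr => aux_pt' hp hm₁ (aux_weight ha α₁ hr.1.le hr.2) hε
    rw [integral_add (hconst ε) (hw₁sc.const_mul _), setIntegral_const, smul_eq_mul, measureReal_def, hvol,
      integral_const_mul] at hmono
    have h2 : (ε ^ (1 - p) * m₁⁻¹) * (∫ r in sc, w₁ r) ≤ (ε ^ (1 - p) * m₁⁻¹) * I₁ :=
      mul_le_mul_of_nonneg_left hw₁le
        (mul_nonneg (Real.rpow_nonneg hε.le _) (inv_nonneg.2 hm₁.le))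
    calc J ≤ a * ε + (ε ^ (1 - p) * m₁⁻¹) * ∫ r in sc, w₁ r := hmono
      _ ≤ a * ε + (ε ^ (1 - p) * m₁⁻¹) * I₁ := by linarith
      _ = a * ε + ε ^ (1 - p) * (m₁⁻¹ * I₁) := by ring
  have hX : (∫ r in sc, |u r|) ≤ (a + 1) * (m₀⁻¹ * I₀) ^ (1 / p) :=
    aux_eps hp ha.le (mul_nonneg (inv_nonneg.2 hm₀.le) hI₀nn) hXb
  have hJ : J ≤ (a + 1) * (m₁⁻¹ * I₁) ^ (1 / p) :=
    aux_eps hp ha.le (mul_nonneg (inv_nonneg.2 hm₁.le) hI₁nn) hJb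
  rw [Real.mul_rpow (inv_nonneg.2 hm₀.le) hI₀nn] at hX
  rw [Real.mul_rpow (inv_nonneg.2 hm₁.le) hI₁nn] at hJ
  have ht₀ : 0 ≤ I₀ ^ (1 / p) := Real.rpow_nonneg hI₀nn _
  have ht₁ : 0 ≤ I₁ ^ (1 / p) := Real.rpow_nonneg hI₁nn _
  have hinv : a * (2 / R) = 1 := by rw [ha_def]; field_simp
  have h2R : 0 ≤ 2 / R := by positivity
  have step1 : |u R| ≤ (2 / R) * (∫ r in sc, |u r|) + J := by
    have := mul_le_mul_of_nonneg_right havg h2R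
    calc |u R| = (a * |u R|) * (2 / R) := by
          rw [mul_comm a (|u R|), mul_assoc, hinv, mul_one]
      _ ≤ ((∫ r in sc, |u r|) + a * J) * (2 / R) := this
      _ = (2 / R) * (∫ r in sc, |u r|) + (a * (2 / R)) * J := by ring
      _ = (2 / R) * (∫ r in sc, |u r|) + J := by rw [hinv, one_mul]
  have step2 : |u R| ≤ (2 / R) * ((a + 1) * ((m₀⁻¹) ^ (1 / p) * I₀ ^ (1 / p))) +
      (a + 1) * ((m₁⁻¹) ^ (1 / p) * I₁ ^ (1 / p)) := by
    have h3 := mul_le_mul_of_nonneg_left hX h2R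
    linarith
  have e1 : 0 ≤ (2 / R) * (a + 1) * (m₀⁻¹) ^ (1 / p) * I₁ ^ (1 / p) :=
    mul_nonneg (mul_nonneg (mul_nonneg h2R (by linarith)) hc₀) ht₁
  have e2 : 0 ≤ (a + 1) * (m₁⁻¹) ^ (1 / p) * I₀ ^ (1 / p) :=
    mul_nonneg (mul_nonneg (by linarith) hc₁) ht₀
  nlinarith [step2, e1, e2]
end

section
/- Let 0<R<∞, p≥1 and α₁ with α₁ - p + 1 > 0. There exists C>0 such that for all u locally absolutely continuous on (0,R] with finite norm ‖u‖_{X_R^{1,p}} = (∫₀ᴿ|u|^p r^{α₀}dr + ∫₀ᴿ|u'|^p r^{α₁}dr)^{1/p}, one has |u(t)| ≤ C t^{-(α₁-p+1)/p} ‖u‖_{X_R^{1,p}} for all t ∈ (0,R]. -/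
open Real MeasureTheory Set

lemma aux_exists_le_avg {f : ℝ → ℝ} {J : Set ℝ} (hJ : MeasurableSet J)
    (h0 : volume J ≠ 0) (hfin : volume J ≠ ⊤) (hf : IntegrableOn f J) :
    ∃ x ∈ J, f x * (volume J).toReal ≤ ∫ x in J, f x := by
  by_contra h
  push_neg at h
  set V := (volume J).toReal with hV
  have hVpos : 0 < V := ENNReal.toReal_pos h0 hfin
  set c : ℝ := (∫ x in J, f x) / V with hc
  have hlt : ∀ x ∈ J, c < f x := by
    intro x hx
    rw [hc, div_lt_iff₀ hVpos]
    exact h x hx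
  have hint_c : IntegrableOn (fun _ => c) J := integrableOn_const hfin
  have hg : IntegrableOn (fun x => f x - c) J := hf.sub hint_c
  have hzero : ∫ x in J, (f x - c) = 0 := by
    rw [integral_sub hf hint_c, setIntegral_const, measureReal_def, ← hV, smul_eq_mul, hc]
    field_simp
    ring
  have hnonneg : 0 ≤ᵐ[volume.restrict J] fun x => f x - c :=
    (ae_restrict_iff' hJ).mpr (ae_of_all _ fun x hx => sub_nonneg.mpr (hlt x hx).le)
  have hae := (integral_eq_zero_iff_of_nonneg_ae hnonneg hg).mp hzero
  have hne : volume.restrict J ≠ 0 := fun hrz => h0 (Measure.restrict_eq_zero.mp hrz)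
  haveI : (ae (volume.restrict J)).NeBot := ae_neBot.mpr hne
  obtain ⟨x, hx0, hxJ⟩ := (hae.and (ae_restrict_mem hJ)).exists
  have : (0:ℝ) < f x - c := sub_pos.mpr (hlt x hxJ)
  rw [show ((0:ℝ→ℝ) x) = (0:ℝ) from rfl] at hx0
  exact absurd hx0 (ne_of_gt this)

lemma aux_memLp {μ : Measure ℝ} {f : ℝ → ℝ} {p : ℝ} (hp : 0 < p)
    (hmeas : AEStronglyMeasurable f μ) (hint : Integrable (fun x => |f x| ^ p) μ) :
    MemLp f (ENNReal.ofReal p) μ := by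
  have A : ENNReal.ofReal p ≠ 0 := by rw [Ne, ENNReal.ofReal_eq_zero, not_le]; exact hp
  have B : ENNReal.ofReal p ≠ ⊤ := ENNReal.ofReal_ne_top
  rw [← memLp_norm_rpow_iff hmeas A B, ENNReal.toReal_ofReal hp.le,
    ENNReal.div_self A B, memLp_one_iff_integrable]
  simpa [Real.norm_eq_abs] using hint

lemma aux_rpow_min_le {a b x e : ℝ} (ha : 0 < a) (hax : a ≤ x) (hxb : x ≤ b) :
    min (a ^ e) (b ^ e) ≤ x ^ e := by
  rcases le_or_gt 0 e with he | he
  · exact le_trans (min_le_left _ _) (Real.rpow_le_rpow ha.le hax he)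
  · exact le_trans (min_le_right _ _) (Real.rpow_le_rpow_of_nonpos (ha.trans_le hax) hxb he.le)

/-- Radial lemma, Sobolev case: `|u(t)| ≤ C t^{-(α₁-p+1)/p} ‖u‖_{X_R^{1,p}}`. -/
theorem stmt_1 (R p α₀ α₁ : ℝ) (hR : 0 < R) (hp : 1 ≤ p)
    (hα₀ : -1 < α₀) (hα₁ : -1 < α₁) (hα : 0 < α₁ - p + 1) :
    ∃ C > 0, ∀ u u' : ℝ → ℝ,
      (∀ t ∈ Ioc (0:ℝ) R, HasDerivAt u (u' t) t) →
      IntegrableOn (fun r => |u r| ^ p * r ^ α₀) (Ioo 0 R) →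
      IntegrableOn (fun r => |u' r| ^ p * r ^ α₁) (Ioo 0 R) →
      ∀ t ∈ Ioc (0:ℝ) R,
        |u t| ≤ C * t ^ (-(α₁ - p + 1) / p) *
          ((∫ r in Ioo (0:ℝ) R, |u r| ^ p * r ^ α₀)
            + (∫ r in Ioo (0:ℝ) R, |u' r| ^ p * r ^ α₁)) ^ (1/p) := by
  have hp0 : (0:ℝ) < p := lt_of_lt_of_le one_pos hp
  have hα₁pos : (0:ℝ) < α₁ := by linarith
  set ν : ℝ := α₁ - p + 1 with hν
  set w : ℝ := min ((R/2) ^ α₀) (R ^ α₀) with hw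
  have hwpos : 0 < w := lt_min (Real.rpow_pos_of_pos (by positivity) _) (Real.rpow_pos_of_pos hR _)
  set c₀ : ℝ := (2 / (R * w)) ^ (1/p) with hc₀
  have hc₀pos : 0 < c₀ := Real.rpow_pos_of_pos (by positivity) _
  set c₁ : ℝ := if p = 1 then 1 else (ν / (p - 1)) ^ (-((p-1)/p)) with hc₁
  have hc₁pos : 0 < c₁ := by
    rw [hc₁]
    split
    · exact one_pos
    · next hne =>
      have : (0:ℝ) < p - 1 := by
        rcases lt_of_le_of_ne hp (Ne.symm hne) with h
        linarith
      exact Real.rpow_pos_of_pos (div_pos hα this) _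
  refine ⟨c₀ * R ^ (ν/p) + c₁ * 2 ^ (ν/p),
    add_pos (mul_pos hc₀pos (Real.rpow_pos_of_pos hR _))
      (mul_pos hc₁pos (Real.rpow_pos_of_pos two_pos _)), ?_⟩
  intro u u' hderiv hu0 hu1 t ht
  obtain ⟨ht0, htR⟩ := ht
  set A := ∫ r in Ioo (0:ℝ) R, |u r| ^ p * r ^ α₀ with hA
  set B := ∫ r in Ioo (0:ℝ) R, |u' r| ^ p * r ^ α₁ with hB
  have hAnn : 0 ≤ A := setIntegral_nonneg measurableSet_Ioo fun r hr =>
    mul_nonneg (Real.rpow_nonneg (abs_nonneg _) _) (Real.rpow_nonneg hr.1.le _)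
  have hBnn : 0 ≤ B := setIntegral_nonneg measurableSet_Ioo fun r hr =>
    mul_nonneg (Real.rpow_nonneg (abs_nonneg _) _) (Real.rpow_nonneg hr.1.le _)
  set m : ℝ := min t (R/2) with hm
  have hm0 : 0 < m := lt_min ht0 (by positivity)
  have hmR : m ≤ R := le_trans (min_le_right _ _) (by linarith)
  have htm : t/2 ≤ m := le_min (by linarith) (by linarith)
  -- integrability facts for u' on (m, R]
  have hsubIoo : Ioo m R ⊆ Ioo 0 R := fun x hx => ⟨hm0.trans hx.1, hx.2⟩
  have hu1' : IntegrableOn (fun r => |u' r| ^ p * r ^ α₁) (Ioc m R) := by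
    rw [integrableOn_Ioc_iff_integrableOn_Ioo]
    exact hu1.mono_set hsubIoo
  have hmeas_u' : AEStronglyMeasurable u' (volume.restrict (Ioc m R)) := by
    refine ((measurable_deriv u).aestronglyMeasurable).congr ?_
    refine (ae_restrict_iff' measurableSet_Ioc).mpr (ae_of_all _ fun x hx => ?_)
    exact (hderiv x ⟨hm0.trans hx.1, hx.2⟩).deriv
  have hint_u' : IntegrableOn u' (Ioc m R) := by
    have hgint : IntegrableOn (fun r => 1 + m ^ (-α₁) * (|u' r| ^ p * r ^ α₁)) (Ioc m R) :=
      (integrableOn_const measure_Ioc_lt_top.ne).add (hu1'.const_mul _)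
    refine Integrable.mono' hgint hmeas_u' ?_
    refine (ae_restrict_iff' measurableSet_Ioc).mpr (ae_of_all _ fun r hr => ?_)
    have hr0 : (0:ℝ) < r := hm0.trans hr.1
    have hX : (0:ℝ) ≤ |u' r| ^ p * r ^ α₁ :=
      mul_nonneg (Real.rpow_nonneg (abs_nonneg _) _) (Real.rpow_nonneg hr0.le _)
    have hterm : (0:ℝ) ≤ m ^ (-α₁) * (|u' r| ^ p * r ^ α₁) :=
      mul_nonneg (Real.rpow_nonneg hm0.le _) hX
    rw [Real.norm_eq_abs]
    rcases le_or_gt (|u' r|) 1 with h1 | h1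
    · linarith
    · have h2 : |u' r| ≤ |u' r| ^ p := by
        calc |u' r| = |u' r| ^ (1:ℝ) := (Real.rpow_one _).symm
        _ ≤ |u' r| ^ p := Real.rpow_le_rpow_of_exponent_le h1.le hp
      have h3 : |u' r| ^ p = (|u' r| ^ p * r ^ α₁) * r ^ (-α₁) := by
        rw [mul_assoc, ← Real.rpow_add hr0]
        simp
      have h4 : r ^ (-α₁) ≤ m ^ (-α₁) :=
        Real.rpow_le_rpow_of_nonpos hm0 hr.1.le (neg_nonpos.mpr hα₁pos.le)
      have h5 : (|u' r| ^ p * r ^ α₁) * r ^ (-α₁) ≤ (|u' r| ^ p * r ^ α₁) * m ^ (-α₁) :=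
        mul_le_mul_of_nonneg_left h4 hX
      have h6 : (|u' r| ^ p * r ^ α₁) * m ^ (-α₁) = m ^ (-α₁) * (|u' r| ^ p * r ^ α₁) := by ring
      linarith [h2, h3 ▸ (h6 ▸ h5)]
  have habs_u' : IntegrableOn (fun r => |u' r|) (Ioc m R) := hint_u'.abs
  -- a.e. inclusion Ioc m R ⊆ Ioo 0 R
  have haesub : (Ioc m R : Set ℝ) ≤ᵐ[volume] (Ioo (0:ℝ) R) := by
    have hRnull : (volume : Measure ℝ) {R} = 0 := measure_singleton R
    filter_upwards [compl_mem_ae_iff.mpr hRnull] with x hx hxm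
    exact ⟨hm0.trans hxm.1, lt_of_le_of_ne hxm.2 (fun h => hx (by simp [h]))⟩
  have hnn1 : 0 ≤ᵐ[volume.restrict (Ioo (0:ℝ) R)] fun r => |u' r| ^ p * r ^ α₁ :=
    (ae_restrict_iff' measurableSet_Ioo).mpr (ae_of_all _ fun r hr =>
      mul_nonneg (Real.rpow_nonneg (abs_nonneg _) _) (Real.rpow_nonneg hr.1.le _))
  have hIocB : ∫ r in Ioc m R, |u' r| ^ p * r ^ α₁ ≤ B :=
    setIntegral_mono_set hu1 hnn1 haesub
  have hIocBnn : 0 ≤ ∫ r in Ioc m R, |u' r| ^ p * r ^ α₁ :=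
    setIntegral_nonneg measurableSet_Ioc fun r hr =>
      mul_nonneg (Real.rpow_nonneg (abs_nonneg _) _) (Real.rpow_nonneg (hm0.trans hr.1).le _)
  -- FTC bound
  have hII : ∀ s ∈ Ioo (R/2) R, |u t| ≤ |u s| + ∫ r in Ioc m R, |u' r| := by
    intro s hs
    have hs0 : (0:ℝ) < s := lt_trans (by positivity) hs.1
    have hsIcc : s ∈ Icc m R := ⟨le_trans (min_le_right _ _) (by linarith [hs.1]), hs.2.le⟩
    have htIcc : t ∈ Icc m R := ⟨min_le_left _ _, htR⟩
    have huIcc : uIcc s t ⊆ Icc m R := uIcc_subset_Icc hsIcc htIcc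
    have hderivI : ∀ x ∈ uIcc s t, HasDerivAt u (u' x) x := fun x hx => by
      have hx' := huIcc hx
      exact hderiv x ⟨lt_of_lt_of_le hm0 hx'.1, hx'.2⟩
    have hint_Icc : IntegrableOn u' (Icc m R) := by
      rw [integrableOn_Icc_iff_integrableOn_Ioc]
      exact hint_u'
    have hivi : IntervalIntegrable u' volume s t :=
      (hint_Icc.mono_set huIcc).intervalIntegrable
    have hftc : ∫ r in s..t, u' r = u t - u s :=
      intervalIntegral.integral_eq_sub_of_hasDerivAt hderivI hivi
    have hnn : 0 ≤ᵐ[volume.restrict (Ioc m R)] fun r => |u' r| :=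
      ae_of_all _ fun r => abs_nonneg _
    have habs : |∫ r in s..t, u' r| ≤ ∫ r in Ioc m R, |u' r| := by
      rcases le_total s t with hst | hst
      · calc |∫ r in s..t, u' r| ≤ ∫ r in s..t, |u' r| :=
              intervalIntegral.abs_integral_le_integral_abs hst
          _ = ∫ r in Ioc s t, |u' r| := intervalIntegral.integral_of_le hst
          _ ≤ ∫ r in Ioc m R, |u' r| := by
              refine setIntegral_mono_set habs_u' hnn ?_
              refine HasSubset.Subset.eventuallyLE ?_
              exact Ioc_subset_Ioc (le_trans (min_le_right _ _) (by linarith [hs.1])) htR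
      · rw [intervalIntegral.integral_symm t s, abs_neg]
        calc |∫ r in t..s, u' r| ≤ ∫ r in t..s, |u' r| :=
              intervalIntegral.abs_integral_le_integral_abs hst
          _ = ∫ r in Ioc t s, |u' r| := intervalIntegral.integral_of_le hst
          _ ≤ ∫ r in Ioc m R, |u' r| := by
              refine setIntegral_mono_set habs_u' hnn ?_
              refine HasSubset.Subset.eventuallyLE ?_
              exact Ioc_subset_Ioc (min_le_left _ _) hs.2.le
    have := abs_add_le (u s) (u t - u s)
    rw [add_sub_cancel] at this
    calc |u t| ≤ |u s| + |u t - u s| := this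
      _ = |u s| + |∫ r in s..t, u' r| := by rw [hftc]
      _ ≤ |u s| + ∫ r in Ioc m R, |u' r| := by linarith [habs]
  -- choose a good point s in (R/2, R)
  have hJvol : (volume (Ioo (R/2) R)).toReal = R/2 := by
    rw [Real.volume_Ioo, ENNReal.toReal_ofReal (by linarith)]
    ring
  obtain ⟨s, hsJ, hsavg⟩ := aux_exists_le_avg (f := fun r => |u r| ^ p * r ^ α₀)
    (J := Ioo (R/2) R) measurableSet_Ioo
    (by rw [Real.volume_Ioo]; simp only [ne_eq, ENNReal.ofReal_eq_zero, not_le]; linarith)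
    (by simp)
    (hu0.mono_set (fun x hx => ⟨lt_trans (by positivity) hx.1, hx.2⟩))
  have hnn0 : 0 ≤ᵐ[volume.restrict (Ioo (0:ℝ) R)] fun r => |u r| ^ p * r ^ α₀ :=
    (ae_restrict_iff' measurableSet_Ioo).mpr (ae_of_all _ fun r hr =>
      mul_nonneg (Real.rpow_nonneg (abs_nonneg _) _) (Real.rpow_nonneg hr.1.le _))
  have hintJle : ∫ r in Ioo (R/2) R, |u r| ^ p * r ^ α₀ ≤ A :=
    setIntegral_mono_set hu0 hnn0
      (HasSubset.Subset.eventuallyLE (fun x hx => ⟨lt_trans (by positivity) hx.1, hx.2⟩))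
  rw [hJvol] at hsavg
  have hfs : |u s| ^ p * s ^ α₀ * (R/2) ≤ A := le_trans hsavg hintJle
  have hsw : w ≤ s ^ α₀ := aux_rpow_min_le (by positivity) hsJ.1.le hsJ.2.le
  have h2 : |u s| ^ p ≤ 2 / (R * w) * A := by
    rw [div_mul_eq_mul_div, le_div_iff₀ (by positivity)]
    have e1 : |u s| ^ p * w ≤ |u s| ^ p * s ^ α₀ :=
      mul_le_mul_of_nonneg_left hsw (Real.rpow_nonneg (abs_nonneg _) _)
    nlinarith [hfs, e1, hR]
  have hus : |u s| ≤ c₀ * A ^ (1/p) := by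
    calc |u s| = (|u s| ^ p) ^ (1/p) := by
          rw [← Real.rpow_mul (abs_nonneg _), mul_one_div_cancel hp0.ne', Real.rpow_one]
      _ ≤ (2 / (R * w) * A) ^ (1/p) :=
          Real.rpow_le_rpow (Real.rpow_nonneg (abs_nonneg _) _) h2 (by positivity)
      _ = c₀ * A ^ (1/p) := by rw [hc₀, ← Real.mul_rpow (by positivity) hAnn]
  -- Claim 3: derivative term
  have hI' : (∫ r in Ioc m R, |u' r|) ≤ c₁ * m ^ (-(ν/p)) * B ^ (1/p) := by
    by_cases hp1 : p = 1
    · subst hp1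
      rw [hc₁, if_pos rfl, one_mul]
      have hν1 : ν = α₁ := by rw [hν]; ring
      rw [hν1]
      norm_num
      have hle : ∀ r ∈ Ioc m R, |u' r| ≤ m ^ (-α₁) * (|u' r| ^ (1:ℝ) * r ^ α₁) := by
        intro r hr
        have hr0 : (0:ℝ) < r := hm0.trans hr.1
        rw [Real.rpow_one]
        calc |u' r| = |u' r| * r ^ α₁ * r ^ (-α₁) := by
              rw [mul_assoc, ← Real.rpow_add hr0]; simp
          _ ≤ |u' r| * r ^ α₁ * m ^ (-α₁) := by
              refine mul_le_mul_of_nonneg_left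
                (Real.rpow_le_rpow_of_nonpos hm0 hr.1.le (neg_nonpos.mpr hα₁pos.le))
                (mul_nonneg (abs_nonneg _) (Real.rpow_nonneg hr0.le _))
          _ = m ^ (-α₁) * (|u' r| * r ^ α₁) := by ring
      calc ∫ r in Ioc m R, |u' r|
          ≤ ∫ r in Ioc m R, m ^ (-α₁) * (|u' r| ^ (1:ℝ) * r ^ α₁) :=
            setIntegral_mono_on habs_u' (hu1'.const_mul _) measurableSet_Ioc hle
        _ = m ^ (-α₁) * ∫ r in Ioc m R, |u' r| ^ (1:ℝ) * r ^ α₁ := by rw [integral_const_mul]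
        _ ≤ m ^ (-α₁) * B :=
            mul_le_mul_of_nonneg_left hIocB (Real.rpow_nonneg hm0.le _)
    · have hp1' : 1 < p := lt_of_le_of_ne hp (Ne.symm hp1)
      have hp_1 : (0:ℝ) < p - 1 := by linarith
      set q : ℝ := p / (p - 1) with hq
      have hpq : p.HolderConjugate q := Real.HolderConjugate.conjExponent hp1'
      have hq0 : (0:ℝ) < q := hpq.symm.pos
      set β : ℝ := α₁ / (p - 1) with hβ
      have hβ1 : 1 < β := by rw [hβ, lt_div_iff₀ hp_1]; linarith
      set f : ℝ → ℝ := fun r => |u' r| * r ^ (α₁ / p) with hf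
      set g : ℝ → ℝ := fun r => r ^ (-(α₁ / p)) with hg
      have hfnn : 0 ≤ᵐ[volume.restrict (Ioc m R)] f :=
        (ae_restrict_iff' measurableSet_Ioc).mpr (ae_of_all _ fun r hr =>
          mul_nonneg (abs_nonneg _) (Real.rpow_nonneg (hm0.trans hr.1).le _))
      have hgnn : 0 ≤ᵐ[volume.restrict (Ioc m R)] g :=
        (ae_restrict_iff' measurableSet_Ioc).mpr (ae_of_all _ fun r hr =>
          Real.rpow_nonneg (hm0.trans hr.1).le _)
      have hcont : ∀ c : ℝ, ContinuousOn (fun r : ℝ => r ^ c) (Ioc m R) := fun c =>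
        continuousOn_id.rpow_const (fun x hx => Or.inl (ne_of_gt (hm0.trans hx.1)))
      have habs_m : AEStronglyMeasurable (fun r => |u' r|) (volume.restrict (Ioc m R)) := by
        simpa [Real.norm_eq_abs] using hmeas_u'.norm
      have hmf : AEStronglyMeasurable f (volume.restrict (Ioc m R)) :=
        habs_m.mul (((hcont _).aestronglyMeasurable) measurableSet_Ioc)
      have hmg : AEStronglyMeasurable g (volume.restrict (Ioc m R)) :=
        ((hcont _).aestronglyMeasurable) measurableSet_Ioc
      have hfp_eq : ∀ r ∈ Ioc m R, |f r| ^ p = |u' r| ^ p * r ^ α₁ := by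
        intro r hr
        have hr0 : (0:ℝ) < r := hm0.trans hr.1
        rw [hf]
        simp only []
        rw [abs_of_nonneg (mul_nonneg (abs_nonneg _) (Real.rpow_nonneg hr0.le _)),
          Real.mul_rpow (abs_nonneg _) (Real.rpow_nonneg hr0.le _),
          ← Real.rpow_mul hr0.le, div_mul_cancel₀ _ hp0.ne']
      have hf_mem : MemLp f (ENNReal.ofReal p) (volume.restrict (Ioc m R)) :=
        aux_memLp hp0 hmf (hu1'.congr ((ae_restrict_iff' measurableSet_Ioc).mpr
          (ae_of_all _ fun r hr => (hfp_eq r hr).symm)))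
      have hgq_eq : ∀ r ∈ Ioc m R, |g r| ^ q = r ^ (-β) := by
        intro r hr
        have hr0 : (0:ℝ) < r := hm0.trans hr.1
        rw [hg]
        simp only []
        rw [abs_of_nonneg (Real.rpow_nonneg hr0.le _), ← Real.rpow_mul hr0.le]
        congr 1
        rw [hq, hβ]
        field_simp
      have hint_g : IntegrableOn (fun r : ℝ => r ^ (-β)) (Ioc m R) := by
        refine IntegrableOn.mono_set ?_ Ioc_subset_Icc_self
        refine ContinuousOn.integrableOn_compact isCompact_Icc ?_
        exact continuousOn_id.rpow_const
          (fun x hx => Or.inl (ne_of_gt (lt_of_lt_of_le hm0 hx.1)))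
      have hg_mem : MemLp g (ENNReal.ofReal q) (volume.restrict (Ioc m R)) :=
        aux_memLp hq0 hmg (hint_g.congr ((ae_restrict_iff' measurableSet_Ioc).mpr
          (ae_of_all _ fun r hr => (hgq_eq r hr).symm)))
      have hH := integral_mul_le_Lp_mul_Lq_of_nonneg hpq hfnn hgnn hf_mem hg_mem
      have hlhs : ∫ r in Ioc m R, |u' r| = ∫ r in Ioc m R, f r * g r := by
        refine setIntegral_congr_fun measurableSet_Ioc (fun r hr => ?_)
        have hr0 : (0:ℝ) < r := hm0.trans hr.1
        rw [hf, hg]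
        simp only []
        rw [mul_assoc, ← Real.rpow_add hr0]
        simp
      have hfpB : ∫ r in Ioc m R, f r ^ p ≤ B := by
        have h1 : ∫ r in Ioc m R, f r ^ p = ∫ r in Ioc m R, |u' r| ^ p * r ^ α₁ := by
          refine setIntegral_congr_fun measurableSet_Ioc (fun r hr => ?_)
          rw [← hfp_eq r hr,
            abs_of_nonneg (mul_nonneg (abs_nonneg _) (Real.rpow_nonneg (hm0.trans hr.1).le _))]
        rw [h1]
        exact hIocB
      have hfpnn : 0 ≤ ∫ r in Ioc m R, f r ^ p :=
        setIntegral_nonneg measurableSet_Ioc fun r hr => Real.rpow_nonneg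
          (mul_nonneg (abs_nonneg _) (Real.rpow_nonneg (hm0.trans hr.1).le _)) _
      have hgq_int : ∫ r in Ioc m R, g r ^ q = ∫ r in Ioc m R, r ^ (-β) := by
        refine setIntegral_congr_fun measurableSet_Ioc (fun r hr => ?_)
        rw [← hgq_eq r hr,
          abs_of_nonneg (Real.rpow_nonneg (hm0.trans hr.1).le _)]
      have hval : ∫ r in Ioc m R, (r:ℝ) ^ (-β) ≤ m ^ (-β + 1) / (β - 1) := by
        rw [← intervalIntegral.integral_of_le hmR]
        rw [integral_rpow (Or.inr ⟨fun h => absurd (neg_injective h) hβ1.ne',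
          by rw [Set.uIcc_of_le hmR]; rintro ⟨h0, -⟩; exact absurd h0 (not_le.mpr hm0)⟩)]
        have hne1 : -β + 1 ≠ 0 := ne_of_lt (by linarith)
        have hne2 : β - 1 ≠ 0 := ne_of_gt (by linarith)
        have heq : (R ^ (-β + 1) - m ^ (-β + 1)) / (-β + 1)
            = (m ^ (-β + 1) - R ^ (-β + 1)) / (β - 1) := by
          rw [div_eq_div_iff hne1 hne2]
          ring
        rw [heq]
        have hRpos : (0:ℝ) < R ^ (-β + 1) := Real.rpow_pos_of_pos hR _
        exact (div_le_div_iff_of_pos_right (by linarith)).mpr (sub_le_self _ hRpos.le)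
      have hgqnn : 0 ≤ ∫ r in Ioc m R, g r ^ q :=
        setIntegral_nonneg measurableSet_Ioc fun r hr => Real.rpow_nonneg
          (Real.rpow_nonneg (hm0.trans hr.1).le _) _
      have h2 : (∫ r in Ioc m R, f r ^ p) ^ (1/p) ≤ B ^ (1/p) :=
        Real.rpow_le_rpow hfpnn hfpB (by positivity)
      have hexp1 : (-β + 1) * (1/q) = -(ν/p) := by
        rw [hβ, hq, hν]
        field_simp
        ring
      have hbase : β - 1 = ν / (p - 1) := by
        rw [hβ, hν]
        field_simp
        ring
      have hqinv : (1:ℝ)/q = (p-1)/p := by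
        rw [hq, one_div_div]
      have h3 : (∫ r in Ioc m R, g r ^ q) ^ (1/q) ≤ c₁ * m ^ (-(ν/p)) := by
        calc (∫ r in Ioc m R, g r ^ q) ^ (1/q)
            ≤ (m ^ (-β + 1) / (β - 1)) ^ (1/q) := by
              refine Real.rpow_le_rpow hgqnn ?_ (by positivity)
              rw [hgq_int]
              exact hval
          _ = c₁ * m ^ (-(ν/p)) := by
              rw [Real.div_rpow (Real.rpow_nonneg hm0.le _) (by linarith : (0:ℝ) ≤ β - 1),
                ← Real.rpow_mul hm0.le, hexp1, div_eq_mul_inv,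
                ← Real.rpow_neg (by linarith : (0:ℝ) ≤ β - 1), mul_comm,
                hc₁, if_neg hp1, hbase, hqinv]
      have hgqpow_nn : 0 ≤ (∫ r in Ioc m R, g r ^ q) ^ (1/q) := Real.rpow_nonneg hgqnn _
      calc ∫ r in Ioc m R, |u' r| = ∫ r in Ioc m R, f r * g r := hlhs
        _ ≤ (∫ r in Ioc m R, f r ^ p) ^ (1/p) * (∫ r in Ioc m R, g r ^ q) ^ (1/q) := hH
        _ ≤ B ^ (1/p) * (c₁ * m ^ (-(ν/p))) :=
            mul_le_mul h2 h3 hgqpow_nn (Real.rpow_nonneg hBnn _)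
        _ = c₁ * m ^ (-(ν/p)) * B ^ (1/p) := by ring
  -- assemble
  have hA1 : A ^ (1/p) ≤ (A + B) ^ (1/p) :=
    Real.rpow_le_rpow hAnn (by linarith) (by positivity)
  have hB1 : B ^ (1/p) ≤ (A + B) ^ (1/p) :=
    Real.rpow_le_rpow hBnn (by linarith) (by positivity)
  have hABnn : (0:ℝ) ≤ (A + B) ^ (1/p) := Real.rpow_nonneg (by linarith) _
  have h1le : (1:ℝ) ≤ R ^ (ν/p) * t ^ (-(ν/p)) := by
    have htp : (0:ℝ) < t ^ (ν/p) := Real.rpow_pos_of_pos ht0 _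
    have h1 : t ^ (ν/p) ≤ R ^ (ν/p) :=
      Real.rpow_le_rpow ht0.le htR (by positivity)
    rw [Real.rpow_neg ht0.le]
    calc (1:ℝ) = t ^ (ν/p) * (t ^ (ν/p))⁻¹ := by field_simp
      _ ≤ R ^ (ν/p) * (t ^ (ν/p))⁻¹ :=
        mul_le_mul_of_nonneg_right h1 (inv_nonneg.mpr htp.le)
  have hm1 : m ^ (-(ν/p)) ≤ 2 ^ (ν/p) * t ^ (-(ν/p)) := by
    have h1 : m ^ (-(ν/p)) ≤ (t/2) ^ (-(ν/p)) :=
      Real.rpow_le_rpow_of_nonpos (by positivity) htm (neg_nonpos.mpr (by positivity))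
    have h2' : ((t:ℝ)/2) ^ (-(ν/p)) = 2 ^ (ν/p) * t ^ (-(ν/p)) := by
      rw [Real.div_rpow ht0.le (by norm_num : (0:ℝ) ≤ 2),
        Real.rpow_neg (by norm_num : (0:ℝ) ≤ 2), div_inv_eq_mul, mul_comm]
    rw [h2'] at h1
    exact h1
  have e1 : c₀ * A ^ (1/p) ≤ c₀ * (R ^ (ν/p) * t ^ (-(ν/p))) * ((A+B) ^ (1/p)) := by
    calc c₀ * A ^ (1/p) = c₀ * 1 * A ^ (1/p) := by ring
      _ ≤ c₀ * (R ^ (ν/p) * t ^ (-(ν/p))) * ((A+B) ^ (1/p)) := by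
          apply mul_le_mul (mul_le_mul_of_nonneg_left h1le hc₀pos.le) hA1
            (Real.rpow_nonneg hAnn _)
            (mul_nonneg hc₀pos.le (le_trans zero_le_one h1le))
  have e2 : c₁ * m ^ (-(ν/p)) * B ^ (1/p) ≤ c₁ * (2 ^ (ν/p) * t ^ (-(ν/p))) * ((A+B) ^ (1/p)) := by
    apply mul_le_mul (mul_le_mul_of_nonneg_left hm1 hc₁pos.le) hB1
      (Real.rpow_nonneg hBnn _)
      (mul_nonneg hc₁pos.le (by positivity))
  have hexp : -ν / p = -(ν/p) := by rw [neg_div]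
  calc |u t| ≤ |u s| + ∫ r in Ioc m R, |u' r| := hII s hsJ
    _ ≤ c₀ * A ^ (1/p) + c₁ * m ^ (-(ν/p)) * B ^ (1/p) := add_le_add hus hI'
    _ ≤ c₀ * (R ^ (ν/p) * t ^ (-(ν/p))) * ((A+B) ^ (1/p))
        + c₁ * (2 ^ (ν/p) * t ^ (-(ν/p))) * ((A+B) ^ (1/p)) := add_le_add e1 e2
    _ = (c₀ * R ^ (ν/p) + c₁ * 2 ^ (ν/p)) * t ^ (-ν / p) * (A + B) ^ (1/p) := by
        rw [hexp]; ring
end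

section
/- Let θ > -1, p > 1, 0 < R < ∞, μ₀ = (θ+1)[(k-1)!]^{p/(p-1)}, and 0 ≤ μ < μ₀. Suppose u:(0,R]→ℝ satisfies |u(t)| ≤ (1/(k-1)!)|log(t/R)|^{(p-1)/p} + C₀ for all t∈(0,R], for some constant C₀ ≥ 0. Then ∫₀ᴿ exp(μ|u(t)|^{p/(p-1)}) t^θ dt < ∞. -/
open Real MeasureTheory Set

/-- Subcritical exponential integrability from a logarithmic pointwise bound. -/
theorem stmt_9 (θ p R μ C₀ : ℝ) (k : ℕ) (hk : 1 ≤ k)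
    (hθ : -1 < θ) (hp : 1 < p) (hR : 0 < R)
    (hμ0 : 0 ≤ μ) (hμ : μ < (θ + 1) * ((Nat.factorial (k-1) : ℝ)) ^ (p/(p-1)))
    (hC₀ : 0 ≤ C₀) (u : ℝ → ℝ) (hu : Measurable u)
    (hbound : ∀ t ∈ Ioc (0:ℝ) R,
      |u t| ≤ (1 / (Nat.factorial (k-1) : ℝ)) * |Real.log (t / R)| ^ ((p-1)/p) + C₀) :
    IntegrableOn (fun t => Real.exp (μ * |u t| ^ (p/(p-1))) * t ^ θ) (Ioo 0 R) := by
  set p' : ℝ := p / (p - 1) with hp'def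
  have hp1 : 0 < p - 1 := by linarith
  have hp'pos : 0 < p' := div_pos (by linarith) hp1
  have hinv : (p - 1) / p = (p')⁻¹ := by
    rw [hp'def]; field_simp
  set F : ℝ := (Nat.factorial (k-1) : ℝ) with hFdef
  have hF : 0 < F := by rw [hFdef]; exact_mod_cast Nat.factorial_pos (k-1)
  have hFp : 0 < F ^ p' := rpow_pos_of_pos hF _
  have hμF : μ / F ^ p' < θ + 1 := (div_lt_iff₀ hFp).mpr hμ
  have hμF0 : 0 ≤ μ / F ^ p' := div_nonneg hμ0 hFp.le
  set a : ℝ := (μ / F ^ p' + (θ + 1)) / 2 with hadef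
  have ha1 : a < θ + 1 := by rw [hadef]; linarith
  have ha0 : 0 < a := by rw [hadef]; linarith
  have hμFa : μ / F ^ p' < a := by rw [hadef]; linarith
  -- key pointwise bound
  have key : ∃ K : ℝ, 0 ≤ K ∧ ∀ t ∈ Ioo (0:ℝ) R,
      μ * |u t| ^ p' ≤ a * |Real.log (t / R)| + K := by
    rcases eq_or_lt_of_le hμ0 with h0 | hμpos
    · refine ⟨0, le_refl 0, fun t ht => ?_⟩
      rw [← h0]
      have : (0:ℝ) ≤ a * |Real.log (t / R)| := by positivity
      simpa using this
    · set s : ℝ := (a / μ) ^ (p')⁻¹ with hsdef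
      have haμ : 0 < a / μ := div_pos ha0 hμpos
      have hs0 : 0 < s := rpow_pos_of_pos haμ _
      have hsp : s ^ p' = a / μ := rpow_inv_rpow haμ.le hp'pos.ne'
      have h6 : (1 / F) ^ p' < s ^ p' := by
        rw [hsp, Real.div_rpow zero_le_one hF.le, Real.one_rpow,
          div_lt_div_iff₀ hFp hμpos]
        have := (div_lt_iff₀ hFp).mp hμFa
        linarith
      have hFs : 1 / F < s := by
        by_contra h
        push_neg at h
        exact absurd (rpow_le_rpow hs0.le h hp'pos.le) (not_le.mpr h6)
      set δ : ℝ := s - 1 / F with hδdef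
      have hδ : 0 < δ := by rw [hδdef]; linarith
      set M : ℝ := (1 / F) * (C₀ / δ) + C₀ with hMdef
      have hM0 : 0 ≤ M := by positivity
      refine ⟨μ * M ^ p', by positivity, fun t ht => ?_⟩
      set L : ℝ := |Real.log (t / R)| with hLdef
      have hL0 : 0 ≤ L := abs_nonneg _
      have hx : |u t| ≤ (1 / F) * L ^ (p')⁻¹ + C₀ := by
        have := hbound t ⟨ht.1, ht.2.le⟩
        rwa [hinv] at this
      by_cases hcase : C₀ ≤ δ * L ^ (p')⁻¹
      · have hx2 : |u t| ≤ s * L ^ (p')⁻¹ := by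
          calc |u t| ≤ (1 / F) * L ^ (p')⁻¹ + δ * L ^ (p')⁻¹ := by linarith
          _ = s * L ^ (p')⁻¹ := by rw [hδdef]; ring
        have hx3 : |u t| ^ p' ≤ (s * L ^ (p')⁻¹) ^ p' :=
          rpow_le_rpow (abs_nonneg _) hx2 hp'pos.le
        have hx4 : (s * L ^ (p')⁻¹) ^ p' = (a / μ) * L := by
          rw [mul_rpow hs0.le (rpow_nonneg hL0 _), hsp,
            rpow_inv_rpow hL0 hp'pos.ne']
        have h7 : μ * |u t| ^ p' ≤ μ * ((a / μ) * L) := by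
          apply mul_le_mul_of_nonneg_left _ hμpos.le
          rw [← hx4]; exact hx3
        have h8 : μ * ((a / μ) * L) = a * L := by field_simp
        have hMK : (0:ℝ) ≤ μ * M ^ p' := by positivity
        linarith
      · push_neg at hcase
        have hL' : L ^ (p')⁻¹ < C₀ / δ := by
          rw [lt_div_iff₀ hδ]; linarith [mul_comm δ (L ^ (p')⁻¹)]
        have hx2 : |u t| ≤ M := by
          rw [hMdef]
          have h5 : (1 / F) * L ^ (p')⁻¹ ≤ (1 / F) * (C₀ / δ) :=
            mul_le_mul_of_nonneg_left hL'.le (by positivity)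
          linarith
        have hx3 : |u t| ^ p' ≤ M ^ p' :=
          rpow_le_rpow (abs_nonneg _) hx2 hp'pos.le
        have : μ * |u t| ^ p' ≤ μ * M ^ p' :=
          mul_le_mul_of_nonneg_left hx3 hμpos.le
        have haL : 0 ≤ a * L := by positivity
        linarith
  obtain ⟨K, hK0, hkey⟩ := key
  have hInt : IntegrableOn (fun t => (Real.exp K * R ^ a) * t ^ (θ - a)) (Ioo 0 R) := by
    exact ((intervalIntegral.integrableOn_Ioo_rpow_iff hR).mpr (by linarith)).const_mul _
  apply Integrable.mono' hInt
  · apply Measurable.aestronglyMeasurable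
    fun_prop
  · filter_upwards [ae_restrict_mem measurableSet_Ioo] with t ht
    have ht0 : 0 < t := ht.1
    have htR : t < R := ht.2
    have htp : 0 < t ^ θ := rpow_pos_of_pos ht0 _
    rw [Real.norm_eq_abs, abs_of_pos (by positivity)]
    have hLlog : |Real.log (t / R)| = Real.log (R / t) := by
      have h1 : t / R < 1 := (div_lt_one hR).mpr htR
      have h2 : Real.log (t / R) < 0 := Real.log_neg (by positivity) h1
      rw [abs_of_neg h2, ← Real.log_inv]
      congr 1
      field_simp
    have hb := hkey t ht
    have hexp : Real.exp (μ * |u t| ^ p') ≤ Real.exp (a * |Real.log (t / R)| + K) :=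
      Real.exp_le_exp.mpr hb
    have hRt : 0 < R / t := by positivity
    have hpow : Real.exp (a * |Real.log (t / R)|) = (R / t) ^ a := by
      rw [hLlog, Real.rpow_def_of_pos hRt, mul_comm]
    calc Real.exp (μ * |u t| ^ p') * t ^ θ
        ≤ Real.exp (a * |Real.log (t / R)| + K) * t ^ θ :=
          mul_le_mul_of_nonneg_right hexp htp.le
      _ = (Real.exp K * R ^ a) * t ^ (θ - a) := by
          rw [Real.exp_add, hpow, Real.div_rpow hR.le ht0.le,
            Real.rpow_sub ht0]
          ring
end

section
/- Let p > 1, θ > -1 and R > 0. Then for every μ > θ+1, sup over u with ∫₀ᴿ|u'|^p r^{p-1}dr ≤ 1 and u(R)=0 of ∫₀ᴿ exp(μ|u|^{p/(p-1)}) r^θ dr is infinite. Specifically, for the Moser-type functions ψ_m(r) = min{1, log(R/r)/log m}·(log m)^{(p-1)/p}/(normalizing factor), the integrals ∫₀ᴿ exp(μ|ψ_m|^{p/(p-1)}) r^θ dr tend to infinity as m→∞. -/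
open Real MeasureTheory Set

set_option maxHeartbeats 1000000 in
/-- Failure of the Trudinger–Moser inequality above the critical threshold `θ+1`:
the supremum over the unit ball is infinite. -/
theorem stmt_10 (R p θ μ : ℝ) (hR : 0 < R) (hp : 1 < p) (hθ : -1 < θ)
    (hμ : θ + 1 < μ) :
    ∀ M : ℝ, ∃ u u' : ℝ → ℝ,
      (∀ t ∈ Ioc (0:ℝ) R, HasDerivAt u (u' t) t) ∧
      u R = 0 ∧
      (∫⁻ r in Ioo (0:ℝ) R, ENNReal.ofReal (|u' r| ^ p * r ^ (p-1)) ≤ 1) ∧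
      ENNReal.ofReal M ≤
        ∫⁻ r in Ioo (0:ℝ) R,
          ENNReal.ofReal (Real.exp (μ * |u r| ^ (p/(p-1))) * r ^ θ) := by
  intro M
  have hp0 : (0:ℝ) < p := by linarith
  have hp1 : (0:ℝ) < p - 1 := by linarith
  have hθ1 : (0:ℝ) < θ + 1 := by linarith
  have hμ0 : (0:ℝ) < μ := by linarith
  set q : ℝ := p / (p - 1) with hqdef
  have hq1 : 1 ≤ q := by rw [hqdef, le_div_iff₀ hp1]; linarith
  have hq0 : (0:ℝ) < q := by linarith
  -- choose the parameter T large
  have hgrow : Filter.Tendsto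
      (fun T : ℝ => exp ((μ - (θ+1)) * T - μ * q) * (R ^ (θ+1) / (θ+1)))
      Filter.atTop Filter.atTop := by
    apply Filter.Tendsto.atTop_mul_const (by positivity)
    apply Real.tendsto_exp_atTop.comp
    apply Filter.tendsto_atTop_add_const_right
    exact Filter.Tendsto.const_mul_atTop (by linarith) Filter.tendsto_id
  obtain ⟨T, hTM, hT1⟩ :=
    ((hgrow.eventually_ge_atTop M).and (Filter.eventually_ge_atTop 1)).exists
  have hT0 : (0:ℝ) < T := by linarith
  have heT : (1:ℝ) ≤ exp T - 1 := by have := Real.add_one_le_exp T; linarith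
  have heT0 : (0:ℝ) < exp T - 1 := by linarith
  set b : ℝ := R / (exp T - 1) with hbdef
  have hb0 : 0 < b := div_pos hR heT0
  have hbR : b ≤ R := by rw [hbdef, div_le_iff₀ heT0]; nlinarith
  have hRb : R + b = b * exp T := by rw [hbdef]; field_simp; ring
  have hRb0 : (0:ℝ) < R + b := by linarith
  set c : ℝ := T ^ (-1/p) with hcdef
  have hc0 : 0 < c := Real.rpow_pos_of_pos hT0 _
  have hcp : c ^ p = T⁻¹ := by
    rw [hcdef, ← Real.rpow_mul hT0.le, div_mul_cancel₀ _ hp0.ne', Real.rpow_neg_one]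
  have hqp : (-1/p) * q = 1 - q := by
    rw [hqdef]; field_simp; ring
  have hcq : c ^ q = T ^ (1 - q) := by
    rw [hcdef, ← Real.rpow_mul hT0.le, hqp]
  have hlogRb : Real.log (R+b) = Real.log b + T := by
    rw [hRb, Real.log_mul hb0.ne' (Real.exp_pos T).ne', Real.log_exp]
  refine ⟨fun r => c * (Real.log (R+b) - Real.log (r+b)),
    fun r => -(c / (r+b)), ?_, ?_, ?_, ?_⟩
  · -- derivative
    intro t ht
    have htb : (0:ℝ) < t + b := by have := ht.1; linarith
    have h1 : HasDerivAt (fun r : ℝ => Real.log (r + b)) (1/(t+b)) t := by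
      simpa using ((hasDerivAt_id t).add_const b).log htb.ne'
    have h2 := (h1.const_sub (Real.log (R+b))).const_mul c
    exact h2.congr_deriv (by beta_reduce; ring)
  · simp
  · -- energy bound
    have hmeas : Measurable fun r : ℝ => ENNReal.ofReal (T⁻¹ * (r + b)⁻¹) := by fun_prop
    have hpt : ∀ r ∈ Ioo (0:ℝ) R,
        ENNReal.ofReal (|-(c/(r+b))| ^ p * r ^ (p-1)) ≤ ENNReal.ofReal (T⁻¹ * (r+b)⁻¹) := by
      intro r hr
      have hr0 : 0 < r := hr.1
      have hrb : 0 < r + b := by linarith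
      apply ENNReal.ofReal_le_ofReal
      have habs : |-(c/(r+b))| = c/(r+b) := by
        rw [abs_neg, abs_of_pos (div_pos hc0 hrb)]
      rw [habs, Real.div_rpow hc0.le hrb.le, hcp]
      calc T⁻¹ / (r+b) ^ p * r ^ (p-1)
          ≤ T⁻¹ / (r+b) ^ p * (r+b) ^ (p-1) := by
            apply mul_le_mul_of_nonneg_left
              (Real.rpow_le_rpow hr0.le (by linarith) (by linarith))
            positivity
        _ = T⁻¹ * (r+b)⁻¹ := by
            rw [div_mul_eq_mul_div, mul_div_assoc, ← Real.rpow_sub hrb]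
            have : p - 1 - p = -1 := by ring
            rw [this, Real.rpow_neg_one]
    have hcont : ContinuousOn (fun r : ℝ => T⁻¹ * (r+b)⁻¹) (Icc 0 R) := by
      apply continuousOn_const.mul
      apply ContinuousOn.inv₀ (by fun_prop)
      intro x hx
      have h := hx.1
      positivity
    have hint : IntegrableOn (fun r : ℝ => T⁻¹ * (r+b)⁻¹) (Ioo 0 R) volume :=
      (hcont.integrableOn_Icc).mono_set Ioo_subset_Icc_self
    have hnn : 0 ≤ᵐ[volume.restrict (Ioo (0:ℝ) R)] fun r => T⁻¹ * (r+b)⁻¹ := by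
      filter_upwards [ae_restrict_mem measurableSet_Ioo] with r hr
      have h := hr.1
      positivity
    calc (∫⁻ r in Ioo (0:ℝ) R, ENNReal.ofReal (|-(c/(r+b))| ^ p * r ^ (p-1)))
        ≤ ∫⁻ r in Ioo (0:ℝ) R, ENNReal.ofReal (T⁻¹ * (r+b)⁻¹) :=
          setLIntegral_mono hmeas hpt
      _ = ENNReal.ofReal (∫ r in Ioo (0:ℝ) R, T⁻¹ * (r+b)⁻¹) :=
          (ofReal_integral_eq_lintegral_ofReal hint hnn).symm
      _ ≤ 1 := by
          have hFTC : ∫ r in (0:ℝ)..R, T⁻¹ * (r+b)⁻¹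
              = T⁻¹ * Real.log (R+b) - T⁻¹ * Real.log (0+b) := by
            apply intervalIntegral.integral_eq_sub_of_hasDerivAt
            · intro t ht
              rw [uIcc_of_le hR.le] at ht
              have htb : (0:ℝ) < t + b := by have := ht.1; linarith
              have := (((hasDerivAt_id t).add_const b).log htb.ne').const_mul T⁻¹
              simpa [one_div] using this
            · apply ContinuousOn.intervalIntegrable
              rw [uIcc_of_le hR.le]
              exact hcont
          have : ∫ r in Ioo (0:ℝ) R, T⁻¹ * (r+b)⁻¹ = 1 := by
            rw [← MeasureTheory.integral_Ioc_eq_integral_Ioo,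
              ← intervalIntegral.integral_of_le hR.le, hFTC, hlogRb]
            rw [zero_add]
            field_simp
            ring
          rw [this, ENNReal.ofReal_one]
  · -- exponential integral lower bound
    have hlog2 : Real.log 2 < 1 := by
      have := Real.log_two_lt_d9; linarith
    have hlog2' : 0 < Real.log 2 := Real.log_pos (by norm_num)
    set h₀ : ℝ := c * (T - Real.log 2) with hh0def
    have hh0 : 0 ≤ h₀ := mul_nonneg hc0.le (by linarith)
    set E : ℝ := exp (μ * h₀ ^ q) with hEdef
    have hE0 : 0 < E := Real.exp_pos _
    -- lower bound for u on (0, b)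
    have hu_lb : ∀ r ∈ Ioo (0:ℝ) b, h₀ ≤ |c * (Real.log (R+b) - Real.log (r+b))| := by
      intro r hr
      have hr0 : 0 < r := hr.1
      have hrb : 0 < r + b := by linarith
      have h2b : r + b ≤ 2 * b := by nlinarith [hr.2]
      have hlog : Real.log (r+b) ≤ Real.log 2 + Real.log b := by
        calc Real.log (r+b) ≤ Real.log (2*b) := Real.log_le_log hrb h2b
          _ = Real.log 2 + Real.log b := Real.log_mul two_ne_zero hb0.ne'
      refine le_trans ?_ (le_abs_self _)
      rw [hh0def, hlogRb]
      apply mul_le_mul_of_nonneg_left _ hc0.le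
      linarith
    have hpt : ∀ r ∈ Ioo (0:ℝ) b,
        ENNReal.ofReal (E * r ^ θ)
          ≤ ENNReal.ofReal (exp (μ * |c * (Real.log (R+b) - Real.log (r+b))| ^ q) * r ^ θ) := by
      intro r hr
      apply ENNReal.ofReal_le_ofReal
      apply mul_le_mul_of_nonneg_right _ (Real.rpow_nonneg hr.1.le θ)
      rw [hEdef]
      apply Real.exp_le_exp.2
      apply mul_le_mul_of_nonneg_left _ hμ0.le
      exact Real.rpow_le_rpow hh0 (hu_lb r hr) hq0.le
    have hmeas2 : Measurable fun r : ℝ =>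
        ENNReal.ofReal (exp (μ * |c * (Real.log (R+b) - Real.log (r+b))| ^ q) * r ^ θ) := by
      measurability
    have hint2 : IntegrableOn (fun r : ℝ => E * r ^ θ) (Ioo 0 b) volume := by
      apply Integrable.const_mul
      exact (intervalIntegral.intervalIntegrable_rpow' hθ).1.mono_set Ioo_subset_Ioc_self
    have hnn2 : 0 ≤ᵐ[volume.restrict (Ioo (0:ℝ) b)] fun r => E * r ^ θ := by
      filter_upwards [ae_restrict_mem measurableSet_Ioo] with r hr
      have h := hr.1
      positivity
    have hval : ∫ r in Ioo (0:ℝ) b, E * r ^ θ = E * (b ^ (θ+1) / (θ+1)) := by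
      rw [← MeasureTheory.integral_Ioc_eq_integral_Ioo,
        ← intervalIntegral.integral_of_le hb0.le,
        intervalIntegral.integral_const_mul, integral_rpow (Or.inl hθ),
        Real.zero_rpow (by linarith : θ + 1 ≠ 0)]
      ring
    -- the key real inequality
    have key1 : R ^ (θ+1) * exp (-((θ+1)*T)) ≤ b ^ (θ+1) := by
      have hbb : R * exp (-T) ≤ b := by
        rw [Real.exp_neg, ← div_eq_mul_inv, hbdef]
        exact div_le_div_of_nonneg_left hR.le heT0 (by linarith [Real.exp_pos T])
      calc R ^ (θ+1) * exp (-((θ+1)*T))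
          = (R * exp (-T)) ^ (θ+1) := by
            rw [Real.mul_rpow hR.le (Real.exp_pos _).le, ← Real.exp_mul]
            ring_nf
        _ ≤ b ^ (θ+1) :=
            Real.rpow_le_rpow (by positivity) hbb hθ1.le
    have key2 : exp (μ*T - μ*q) ≤ E := by
      rw [hEdef]
      apply Real.exp_le_exp.2
      have hTq : T - q ≤ h₀ ^ q := by
        have hs : -1 ≤ -(Real.log 2 / T) := by
          rw [neg_le_neg_iff]
          calc Real.log 2 / T ≤ Real.log 2 / 1 :=
                div_le_div_of_nonneg_left hlog2'.le one_pos hT1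
            _ ≤ 1 := by rw [div_one]; exact hlog2.le
        have hbern := one_add_mul_self_le_rpow_one_add hs hq1
        have hfact : T - Real.log 2 = T * (1 + -(Real.log 2 / T)) := by
          field_simp
          ring
        have hexp : h₀ ^ q = T * (1 + -(Real.log 2 / T)) ^ q := by
          rw [hh0def, Real.mul_rpow hc0.le (by linarith), hcq, hfact,
            Real.mul_rpow hT0.le (by linarith [hs]), ← mul_assoc,
            ← Real.rpow_add hT0]
          norm_num
        rw [hexp]
        calc T - q ≤ T - q * Real.log 2 := by nlinarith
          _ = T * (1 + q * -(Real.log 2 / T)) := by field_simp; ring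
          _ ≤ T * (1 + -(Real.log 2 / T)) ^ q := by
              apply mul_le_mul_of_nonneg_left hbern hT0.le
      calc μ*T - μ*q = μ * (T - q) := by ring
        _ ≤ μ * h₀ ^ q := mul_le_mul_of_nonneg_left hTq hμ0.le
    have hM' : M ≤ E * (b ^ (θ+1) / (θ+1)) := by
      refine hTM.trans ?_
      rw [div_eq_mul_inv (R ^ (θ+1)), div_eq_mul_inv (b ^ (θ+1)), ← mul_assoc, ← mul_assoc]
      apply mul_le_mul_of_nonneg_right _ (by positivity)
      have hsplit : exp ((μ - (θ+1)) * T - μ * q) * R ^ (θ+1)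
          = exp (μ*T - μ*q) * (R ^ (θ+1) * exp (-((θ+1)*T))) := by
        rw [← mul_assoc, mul_comm (exp (μ*T - μ*q)) (R ^ (θ+1)), mul_assoc, ← Real.exp_add]
        ring_nf
      rw [hsplit]
      exact mul_le_mul key2 key1 (by positivity) hE0.le
    calc ENNReal.ofReal M ≤ ENNReal.ofReal (E * (b ^ (θ+1) / (θ+1))) :=
          ENNReal.ofReal_le_ofReal hM'
      _ = ∫⁻ r in Ioo (0:ℝ) b, ENNReal.ofReal (E * r ^ θ) := by
          rw [← hval]; exact ofReal_integral_eq_lintegral_ofReal hint2 hnn2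
      _ ≤ ∫⁻ r in Ioo (0:ℝ) b,
            ENNReal.ofReal (exp (μ * |c * (Real.log (R+b) - Real.log (r+b))| ^ q) * r ^ θ) :=
          setLIntegral_mono hmeas2 hpt
      _ ≤ ∫⁻ r in Ioo (0:ℝ) R,
            ENNReal.ofReal (exp (μ * |c * (Real.log (R+b) - Real.log (r+b))| ^ q) * r ^ θ) :=
          lintegral_mono_set (Ioo_subset_Ioo le_rfl hbR)
end

section
/- Let 0<R<∞, p>1, α₁ = p-1, θ > -1. For every u locally absolutely continuous on (0,R] with ∫₀ᴿ|u|^p r^{α₀}dr < ∞ and ∫₀ᴿ|u'|^p r^{p-1}dr < ∞, one has lim_{r→0} u(r)/|log r|^{(p-1)/p} = 0. -/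
open Real MeasureTheory Set
open scoped ENNReal NNReal

lemma memLp_of_integrable_rpow {μ : Measure ℝ} {f : ℝ → ℝ} {p : ℝ} (hp : 0 < p)
    (hm : AEStronglyMeasurable f μ) (hi : Integrable (fun x => |f x| ^ p) μ) :
    MemLp f (ENNReal.ofReal p) μ := by
  have hq0 : ENNReal.ofReal p ≠ 0 := by simp [ENNReal.ofReal_eq_zero, not_le, hp]
  have hqt : ENNReal.ofReal p ≠ ⊤ := ENNReal.ofReal_ne_top
  have h := memLp_norm_rpow_iff (q := ENNReal.ofReal p) (p := ENNReal.ofReal p) hm hq0 hqt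
  rw [ENNReal.div_self hq0 hqt] at h
  refine h.mp ?_
  rw [memLp_one_iff_integrable]
  have : (fun x => ‖f x‖ ^ (ENNReal.ofReal p).toReal) = fun x => |f x| ^ p := by
    funext x; rw [Real.norm_eq_abs, ENNReal.toReal_ofReal hp.le]
  rw [this]; exact hi

lemma key_estimate (p : ℝ) (hp : 1 < p) (u u' : ℝ → ℝ) {s t R : ℝ}
    (hs : 0 < s) (hst : s ≤ t) (htR : t < R)
    (hderiv : ∀ x ∈ Ioc (0:ℝ) R, HasDerivAt u (u' x) x)
    (hu' : IntegrableOn (fun r => |u' r| ^ p * r ^ (p-1)) (Ioo 0 R)) :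
    |u t - u s| ≤ (∫ r in Ioc s t, |u' r| ^ p * r ^ (p-1)) ^ (1/p)
      * (Real.log t - Real.log s) ^ ((p-1)/p) := by
  have hp0 : (0:ℝ) < p := lt_trans one_pos hp
  set q : ℝ := p / (p-1) with hq
  have hpq : p.HolderConjugate q := Real.HolderConjugate.conjExponent hp
  set e : ℝ := (p-1)/p with he
  have he0 : 0 < e := div_pos (sub_pos.2 hp) hp0
  set μ := volume.restrict (Ioc s t) with hμ
  have hsub : Ioc s t ⊆ Ioc 0 R := fun x hx => ⟨lt_trans hs hx.1, hx.2.trans htR.le⟩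
  have hsub' : Ioc s t ⊆ Ioo 0 R := fun x hx => ⟨lt_trans hs hx.1, lt_of_le_of_lt hx.2 htR⟩
  -- a.e. membership
  have hmem : ∀ᵐ r ∂μ, r ∈ Ioc s t :=
    ae_restrict_mem measurableSet_Ioc
  -- measurability of u' w.r.t. μ
  have hu'm : AEStronglyMeasurable u' μ := by
    have h1 : ∀ᵐ r ∂μ, deriv u r = u' r := by
      filter_upwards [hmem] with r hr
      exact (hderiv r (hsub hr)).deriv
    exact (measurable_deriv u).aestronglyMeasurable.congr h1
  set f : ℝ → ℝ := fun r => |u' r| * r ^ e with hf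
  set g : ℝ → ℝ := fun r => r ^ (-e) with hg
  have habs : AEStronglyMeasurable (fun r => |u' r|) μ :=
    hu'm.norm.congr (Filter.Eventually.of_forall fun x => (Real.norm_eq_abs _))
  have hfm : AEStronglyMeasurable f μ :=
    habs.mul ((measurable_id.pow_const e).aestronglyMeasurable)
  have hgm : AEStronglyMeasurable g μ := (measurable_id.pow_const (-e)).aestronglyMeasurable
  -- the integrand identity on Ioc s t
  have hfp : ∀ᵐ r ∂μ, |f r| ^ p = |u' r| ^ p * r ^ (p-1) := by
    filter_upwards [hmem] with r hr
    have hr0 : (0:ℝ) < r := lt_trans hs hr.1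
    have h1 : |f r| = f r := abs_of_nonneg (mul_nonneg (abs_nonneg _) (rpow_nonneg hr0.le _))
    have hep : e * p = p - 1 := by rw [he, div_mul_cancel₀ _ hp0.ne']
    rw [h1, hf, Real.mul_rpow (abs_nonneg _) (rpow_nonneg hr0.le _),
      ← Real.rpow_mul hr0.le, hep]
  have hfabs : ∀ᵐ r ∂μ, |f r| = f r := by
    filter_upwards [hmem] with r hr
    exact abs_of_nonneg (mul_nonneg (abs_nonneg _) (rpow_nonneg (lt_trans hs hr.1).le _))
  have hfp' : ∀ᵐ r ∂μ, f r ^ p = |u' r| ^ p * r ^ (p-1) := by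
    filter_upwards [hfp, hfabs] with r h1 h2
    rw [← h2, h1]
  have hint1 : Integrable (fun r => |u' r| ^ p * r ^ (p-1)) μ := hu'.mono_set hsub'
  have hfint : Integrable (fun x => |f x| ^ p) μ := hint1.congr (by
    filter_upwards [hfp] with r h; exact h.symm)
  have hf_mem : MemLp f (ENNReal.ofReal p) μ := memLp_of_integrable_rpow hp0 hfm hfint
  -- g side
  have hq0 : (0:ℝ) < q := hpq.symm.pos
  have hinv : Integrable (fun r : ℝ => r⁻¹) μ := by
    have hc : ContinuousOn (fun r : ℝ => r⁻¹) (Icc s t) :=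
      continuousOn_id.inv₀ (fun x hx => (lt_of_lt_of_le hs hx.1).ne')
    exact (hc.integrableOn_Icc).mono_set Ioc_subset_Icc_self
  have hgabs : ∀ᵐ r ∂μ, |g r| = g r := by
    filter_upwards [hmem] with r hr
    exact abs_of_nonneg (rpow_nonneg (lt_trans hs hr.1).le _)
  have heq : -e * q = -1 := by
    have h1 : p - 1 ≠ 0 := sub_ne_zero.2 hp.ne'
    rw [he, hq]
    field_simp
  have hgq : ∀ᵐ r ∂μ, g r ^ q = r⁻¹ := by
    filter_upwards [hmem] with r hr
    have hr0 : (0:ℝ) < r := lt_trans hs hr.1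
    rw [hg, ← Real.rpow_mul hr0.le, heq, Real.rpow_neg_one]
  have hgq' : ∀ᵐ r ∂μ, |g r| ^ q = r⁻¹ := by
    filter_upwards [hgq, hgabs] with r h1 h2
    rw [h2, h1]
  have hgint : Integrable (fun x => |g x| ^ q) μ := hinv.congr (by
    filter_upwards [hgq'] with r h; exact h.symm)
  have hg_mem : MemLp g (ENNReal.ofReal q) μ := memLp_of_integrable_rpow hq0 hgm hgint
  -- nonnegativity
  have hfnn : 0 ≤ᵐ[μ] f := by
    filter_upwards [hfabs] with r h
    rw [← h]; exact abs_nonneg _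
  have hgnn : 0 ≤ᵐ[μ] g := by
    filter_upwards [hgabs] with r h
    rw [← h]; exact abs_nonneg _
  have holder := integral_mul_le_Lp_mul_Lq_of_nonneg hpq hfnn hgnn hf_mem hg_mem
  -- value of the two integrals
  have h1 : ∫ a, f a ^ p ∂μ = ∫ r in Ioc s t, |u' r| ^ p * r ^ (p-1) := integral_congr_ae hfp'
  have ht0 : (0:ℝ) < t := lt_of_lt_of_le hs hst
  have h2 : ∫ a, g a ^ q ∂μ = Real.log t - Real.log s := by
    rw [integral_congr_ae hgq, hμ, ← intervalIntegral.integral_of_le hst,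
      integral_inv_of_pos hs ht0, Real.log_div ht0.ne' hs.ne']
  -- integrability of u' on Ioc s t
  have h111 : (1:ℝ≥0∞)/1 = 1/ENNReal.ofReal q + 1/ENNReal.ofReal p := by
    simp only [one_div, inv_one]
    rw [add_comm]
    exact hpq.inv_add_inv_ennreal.symm
  have hmul : Integrable (fun r => g r * f r) μ := by
    have h := hf_mem.smul hg_mem (hpqr := ⟨by simpa only [one_div] using h111.symm⟩)
    rw [memLp_one_iff_integrable] at h
    exact h.congr (Filter.Eventually.of_forall fun x => by simp [smul_eq_mul])
  have hfg : ∀ᵐ r ∂μ, f r * g r = |u' r| := by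
    filter_upwards [hmem] with r hr
    have hr0 : (0:ℝ) < r := lt_trans hs hr.1
    rw [hf, hg, mul_assoc, ← Real.rpow_add hr0, add_neg_cancel, Real.rpow_zero, mul_one]
  have habs' : Integrable (fun r => |u' r|) μ := by
    refine hmul.congr ?_
    filter_upwards [hfg] with r h
    rw [mul_comm, h]
  have hu'int : Integrable u' μ := by
    refine (integrable_norm_iff hu'm).mp ?_
    exact habs'.congr (Filter.Eventually.of_forall fun x => (Real.norm_eq_abs _).symm)
  have hii : IntervalIntegrable u' volume s t := by
    rw [intervalIntegrable_iff, uIoc_of_le hst]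
    exact hu'int
  have hftc : ∫ x in s..t, u' x = u t - u s := by
    refine intervalIntegral.integral_eq_sub_of_hasDerivAt (fun x hx => hderiv x ?_) hii
    rw [uIcc_of_le hst] at hx
    exact ⟨lt_of_lt_of_le hs hx.1, hx.2.trans htR.le⟩
  have hoq : 1/q = (p-1)/p := by
    rw [hq, one_div_div]
  calc |u t - u s| = ‖∫ x in s..t, u' x‖ := by rw [hftc, Real.norm_eq_abs]
    _ ≤ ∫ x in Set.uIoc s t, ‖u' x‖ := intervalIntegral.norm_integral_le_integral_norm_uIoc
    _ = ∫ a, f a * g a ∂μ := by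
        rw [uIoc_of_le hst]
        refine (integral_congr_ae ?_).symm
        filter_upwards [hfg] with r h
        rw [h, Real.norm_eq_abs]
    _ ≤ (∫ a, f a ^ p ∂μ) ^ (1/p) * (∫ a, g a ^ q ∂μ) ^ (1/q) := holder
    _ = _ := by rw [h1, h2, hoq]

/-- Vanishing at the origin relative to the critical logarithmic profile. -/
theorem stmt_17 (R p α₀ : ℝ) (hR : 0 < R) (hp : 1 < p)
    (u u' : ℝ → ℝ)
    (hderiv : ∀ t ∈ Ioc (0:ℝ) R, HasDerivAt u (u' t) t)
    (hu : IntegrableOn (fun r => |u r| ^ p * r ^ α₀) (Ioo 0 R))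
    (hu' : IntegrableOn (fun r => |u' r| ^ p * r ^ (p-1)) (Ioo 0 R)) :
    Filter.Tendsto (fun r => u r / |Real.log r| ^ ((p-1)/p))
      (nhdsWithin 0 (Ioi 0)) (nhds 0) := by
  have hp0 : (0:ℝ) < p := lt_trans one_pos hp
  set e : ℝ := (p-1)/p with he
  have he0 : 0 < e := div_pos (sub_pos.2 hp) hp0
  set F : ℝ → ℝ := fun r => |u' r| ^ p * r ^ (p-1) with hF
  rw [NormedAddCommGroup.tendsto_nhds_zero]
  intro ε hε
  -- absolute continuity of the integral
  have hmeas : Filter.Tendsto ((volume.restrict (Ioo 0 R)) ∘ fun t => Ioc (0:ℝ) t)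
      (nhdsWithin 0 (Ioi 0)) (nhds 0) := by
    have h2 : Filter.Tendsto (fun t : ℝ => ENNReal.ofReal t) (nhdsWithin 0 (Ioi 0)) (nhds 0) := by
      simpa using (ENNReal.continuous_ofReal.tendsto 0).mono_left nhdsWithin_le_nhds
    refine tendsto_of_tendsto_of_tendsto_of_le_of_le tendsto_const_nhds h2
      (fun t => zero_le) (fun t => ?_)
    simp only [Function.comp_apply, Measure.restrict_apply measurableSet_Ioc]
    calc volume (Ioc (0:ℝ) t ∩ Ioo 0 R) ≤ volume (Ioc (0:ℝ) t) :=
          measure_mono inter_subset_left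
      _ = ENNReal.ofReal t := by rw [Real.volume_Ioc, sub_zero]
  have habs0 : Filter.Tendsto (fun t => ∫ x in Ioc (0:ℝ) t, F x ∂(volume.restrict (Ioo 0 R)))
      (nhdsWithin 0 (Ioi 0)) (nhds 0) := hu'.tendsto_setIntegral_nhds_zero hmeas
  have hεp : (0:ℝ) < (ε/2)^p := rpow_pos_of_pos (half_pos hε) p
  have hev := (habs0.eventually_lt_const hεp).and
    (Ioo_mem_nhdsGT_of_mem (show (0:ℝ) ∈ Ico (0:ℝ) (min R 1) from ⟨le_refl _, lt_min hR one_pos⟩))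
  obtain ⟨t₀, hC, ht₀⟩ := hev.exists
  set C : ℝ := ∫ x in Ioc (0:ℝ) t₀, F x ∂(volume.restrict (Ioo 0 R)) with hCdef
  have ht₀R : t₀ < R := ht₀.2.trans_le (min_le_left _ _)
  have ht₀1 : t₀ < 1 := ht₀.2.trans_le (min_le_right _ _)
  have ht₀0 : 0 < t₀ := ht₀.1
  -- C rewritten as an integral over an intersection
  have hCeq : C = ∫ x in Ioc (0:ℝ) t₀ ∩ Ioo 0 R, F x := by
    rw [hCdef, Measure.restrict_restrict measurableSet_Ioc]
  have hC0 : 0 ≤ C := by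
    rw [hCeq]
    refine setIntegral_nonneg (measurableSet_Ioc.inter measurableSet_Ioo) (fun r hr => ?_)
    exact mul_nonneg (rpow_nonneg (abs_nonneg _) _) (rpow_nonneg hr.1.1.le _)
  have hC' : C ^ (1/p) < ε/2 := by
    have h := Real.rpow_lt_rpow hC0 hC (by positivity : (0:ℝ) < 1/p)
    rwa [← Real.rpow_mul (by positivity : (0:ℝ) ≤ ε/2), mul_one_div_cancel hp0.ne',
      Real.rpow_one] at h
  have hC'0 : 0 ≤ C ^ (1/p) := rpow_nonneg hC0 _
  set δ : ℝ := ε - C ^ (1/p) with hδdef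
  have hδ0 : 0 < δ := by
    have h : C ^ (1/p) < ε := hC'.trans (by linarith)
    simp only [hδdef]
    linarith
  -- the logarithmic denominator tends to infinity
  have hD : Filter.Tendsto (fun s => |Real.log s| ^ e) (nhdsWithin 0 (Ioi 0)) Filter.atTop := by
    have hlog : Filter.Tendsto Real.log (nhdsWithin 0 (Ioi 0)) Filter.atBot :=
      Real.tendsto_log_nhdsGT_zero
    have hneg : Filter.Tendsto (fun s => -Real.log s) (nhdsWithin 0 (Ioi 0)) Filter.atTop :=
      Filter.tendsto_neg_atBot_atTop.comp hlog
    have habslog : Filter.Tendsto (fun s => |Real.log s|) (nhdsWithin 0 (Ioi 0)) Filter.atTop := by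
      refine hneg.congr' ?_
      filter_upwards [Ioo_mem_nhdsGT_of_mem
        (show (0:ℝ) ∈ Ico (0:ℝ) 1 from ⟨le_refl _, one_pos⟩)] with s hs
      exact (abs_of_neg (Real.log_neg hs.1 hs.2)).symm
    exact (tendsto_rpow_atTop he0).comp habslog
  have htend : Filter.Tendsto (fun s => |u t₀| / |Real.log s| ^ e)
      (nhdsWithin 0 (Ioi 0)) (nhds 0) := Filter.Tendsto.div_atTop tendsto_const_nhds hD
  filter_upwards [Ioo_mem_nhdsGT_of_mem
      (show (0:ℝ) ∈ Ico (0:ℝ) t₀ from ⟨le_refl _, ht₀0⟩),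
    htend.eventually_lt_const hδ0] with s hs hsδ
  have hs0 : 0 < s := hs.1
  have hst₀ : s < t₀ := hs.2
  have hs1 : s < 1 := hst₀.trans ht₀1
  have hlogs : Real.log s < 0 := Real.log_neg hs0 hs1
  set D : ℝ := |Real.log s| ^ e with hDdef
  have hD0 : 0 < D := rpow_pos_of_pos (abs_pos.2 hlogs.ne) e
  -- the key estimate
  set A : ℝ := ∫ r in Ioc s t₀, F r with hAdef
  have hA0 : 0 ≤ A := by
    refine setIntegral_nonneg measurableSet_Ioc (fun r hr => ?_)
    exact mul_nonneg (rpow_nonneg (abs_nonneg _) _) (rpow_nonneg (hs0.trans hr.1).le _)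
  have hAC : A ≤ C := by
    rw [hAdef, hCeq]
    refine setIntegral_mono_set (hu'.mono_set inter_subset_right) ?_ ?_
    · refine (ae_restrict_iff' (measurableSet_Ioc.inter measurableSet_Ioo)).2
        (Filter.Eventually.of_forall (fun r hr => ?_))
      exact mul_nonneg (rpow_nonneg (abs_nonneg _) _) (rpow_nonneg hr.1.1.le _)
    · refine HasSubset.Subset.eventuallyLE (fun r hr => ?_)
      exact ⟨⟨hs0.trans hr.1, hr.2⟩, ⟨hs0.trans hr.1, hr.2.trans_lt ht₀R⟩⟩
  have hkey : |u t₀ - u s| ≤ A ^ (1/p) * (Real.log t₀ - Real.log s) ^ e :=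
    key_estimate p hp u u' hs0 hst₀.le ht₀R hderiv hu'
  have hlog_le : (Real.log t₀ - Real.log s) ^ e ≤ D := by
    rw [hDdef, abs_of_neg hlogs]
    refine Real.rpow_le_rpow ?_ ?_ he0.le
    · rw [sub_nonneg]
      exact Real.log_le_log hs0 hst₀.le
    · have : Real.log t₀ ≤ 0 := Real.log_nonpos ht₀0.le ht₀1.le
      linarith
  have hA' : A ^ (1/p) ≤ C ^ (1/p) := Real.rpow_le_rpow hA0 hAC (by positivity)
  have hmain : |u s| ≤ |u t₀| + C ^ (1/p) * D := by
    have h1 : |u s| ≤ |u t₀| + |u t₀ - u s| := by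
      have := abs_sub_abs_le_abs_sub (u s) (u t₀)
      rw [abs_sub_comm (u s) (u t₀)] at this
      linarith
    have h2 : A ^ (1/p) * (Real.log t₀ - Real.log s) ^ e ≤ C ^ (1/p) * D :=
      mul_le_mul hA' hlog_le (rpow_nonneg (by rw [sub_nonneg]; exact Real.log_le_log hs0 hst₀.le) _) hC'0
    linarith [hkey]
  -- conclude
  have : ‖u s / |Real.log s| ^ e‖ = |u s| / D := by
    rw [Real.norm_eq_abs, abs_div, abs_of_nonneg hD0.le]
  rw [this]
  have hfinal : |u s| / D ≤ |u t₀| / D + C ^ (1/p) := by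
    have h : |u s| / D ≤ (|u t₀| + C ^ (1/p) * D) / D := by gcongr
    rwa [add_div, mul_div_assoc, div_self hD0.ne', mul_one] at h
  calc |u s| / D ≤ |u t₀| / D + C ^ (1/p) := hfinal
    _ < δ + C ^ (1/p) := by linarith [hsδ]
    _ = ε := by rw [hδdef]; ring
end
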